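/- arXiv:0910.1202 — 3 statements merged into one kernel-verified Lean document; each statement's English description precedes it below -/
import Mathlib

section
/- Let n_1 < n_2 < ⋯ < n_s be integers and let E_1, …, E_s ⊆ [0,1] be Lebesgue-measurable sets. Then for any 0 < q < ∞, ∫_0^1 (Σ_{j=1}^s 2^{n_j/q} χ_{E_j}(x))^q dx ≤ (1/(1 − (1/2)^{1/q}))^q · Σ_{j=1}^s 2^{n_j} |E_j|, where |E_j| denotes the Lebesgue measure of E_j. -/
open MeasureTheory

private lemma strictMono_int_gap {s : ℕ} {n : Fin s → ℤ} (hn : StrictMono n) :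
    ∀ d : ℕ, ∀ i j : Fin s, (j : ℕ) = (i : ℕ) + d → n i + d ≤ n j := by
  intro d
  induction d with
  | zero =>
    intro i j h
    have : i = j := Fin.ext (by omega)
    simp [this]
  | succ d ih =>
    intro i j h
    have hj' : (i : ℕ) + d < s := by omega
    set j' : Fin s := ⟨(i : ℕ) + d, hj'⟩ with hj'def
    have h1 : n i + d ≤ n j' := ih i j' rfl
    have h2 : n j' < n j := hn (by simp [Fin.lt_def, hj'def]; omega)
    push_cast
    omega

/-- For integers `n_1 < ⋯ < n_s`, measurable sets `E_1, …, E_s ⊆ [0,1]`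
and any `0 < q < ∞`,
`∫_0^1 (∑_j 2^{n_j/q} χ_{E_j}(x))^q dx ≤ (1/(1 − (1/2)^{1/q}))^q · ∑_j 2^{n_j} |E_j|`. -/
theorem indicator_sum_integral_bound (s : ℕ) (n : Fin s → ℤ) (hn : StrictMono n)
    (E : Fin s → Set ℝ) (hE : ∀ j, MeasurableSet (E j)) (hE1 : ∀ j, E j ⊆ Set.Icc 0 1)
    (q : ℝ) (hq : 0 < q) :
    ∫ x in Set.Icc (0 : ℝ) 1,
        (∑ j, (2 : ℝ) ^ ((n j : ℝ) / q) * (E j).indicator (fun _ => (1 : ℝ)) x) ^ q ≤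
      (1 / (1 - (1 / 2 : ℝ) ^ (1 / q))) ^ q *
        ∑ j, (2 : ℝ) ^ (n j) * (volume (E j)).toReal := by
  set r : ℝ := (1 / 2 : ℝ) ^ (1 / q) with hr_def
  have hr0 : 0 ≤ r := Real.rpow_nonneg (by norm_num) _
  have hr1 : r < 1 := Real.rpow_lt_one (by norm_num) (by norm_num) (by positivity)
  set C : ℝ := 1 / (1 - r) with hC_def
  have hC0 : 0 < C := by
    rw [hC_def]
    have : 0 < 1 - r := by linarith
    positivity
  -- r = 2 ^ (-(1/q))
  have hr_eq : r = (2 : ℝ) ^ (-(1 / q)) := by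
    rw [hr_def, one_div (2 : ℝ), Real.inv_rpow (by norm_num),
      ← Real.rpow_neg (by norm_num)]
  -- the exceptional sets
  set F : Fin s → Set ℝ := fun j => E j \ ⋃ k, ⋃ (_ : j < k), E k with hF_def
  have hFmeas : ∀ j, MeasurableSet (F j) :=
    fun j => (hE j).diff (MeasurableSet.iUnion fun k => MeasurableSet.iUnion fun _ => hE k)
  have hFsub : ∀ j, F j ⊆ E j := fun j => Set.diff_subset
  -- geometric sum bound
  have hgeom : ∀ m : ℕ, ∑ k ∈ Finset.range m, r ^ k ≤ C := by
    intro m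
    rw [hC_def, one_div]
    exact sum_le_hasSum _ (fun k _ => pow_nonneg hr0 k)
      (hasSum_geometric_of_lt_one hr0 hr1)
  -- key sum bound
  have hkey : ∀ j : Fin s, ∑ i ∈ Finset.Iic j, (2 : ℝ) ^ ((n i : ℝ) / q)
      ≤ C * (2 : ℝ) ^ ((n j : ℝ) / q) := by
    intro j
    have step : ∀ i ∈ Finset.Iic j, (2 : ℝ) ^ ((n i : ℝ) / q)
        ≤ (2 : ℝ) ^ ((n j : ℝ) / q) * r ^ ((j : ℕ) - (i : ℕ)) := by
      intro i hi
      have hij : i ≤ j := Finset.mem_Iic.mp hi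
      set k : ℕ := (j : ℕ) - (i : ℕ) with hk
      have hni : n i + (k : ℤ) ≤ n j := by
        apply strictMono_int_gap hn k i j
        have := Fin.le_def.mp hij
        omega
      have hrk : r ^ k = (2 : ℝ) ^ (-(k : ℝ) / q) := by
        rw [hr_eq, ← Real.rpow_natCast ((2:ℝ) ^ (-(1/q))) k,
          ← Real.rpow_mul (by norm_num)]
        ring_nf
      have hni' : (n i : ℝ) + (k : ℝ) ≤ (n j : ℝ) := by exact_mod_cast hni
      rw [hrk, ← Real.rpow_add (by norm_num)]
      apply Real.rpow_le_rpow_left_iff (by norm_num : (1:ℝ) < 2) |>.mpr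
      rw [← add_div, div_le_div_iff_of_pos_right hq]
      linarith
    calc ∑ i ∈ Finset.Iic j, (2 : ℝ) ^ ((n i : ℝ) / q)
        ≤ ∑ i ∈ Finset.Iic j, (2 : ℝ) ^ ((n j : ℝ) / q) * r ^ ((j : ℕ) - (i : ℕ)) :=
          Finset.sum_le_sum step
      _ = (2 : ℝ) ^ ((n j : ℝ) / q) * ∑ i ∈ Finset.Iic j, r ^ ((j : ℕ) - (i : ℕ)) := by
          rw [Finset.mul_sum]
      _ = (2 : ℝ) ^ ((n j : ℝ) / q) * ∑ k ∈ Finset.range ((j : ℕ) + 1), r ^ k := by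
          congr 1
          refine Finset.sum_nbij' (fun i => (j : ℕ) - (i : ℕ))
            (fun k => ⟨(j : ℕ) - k, by omega⟩) ?_ ?_ ?_ ?_ ?_
          · intro a ha
            have := Fin.le_def.mp (Finset.mem_Iic.mp ha)
            simp only [Finset.mem_range]
            omega
          · intro a ha
            simp only [Finset.mem_range] at ha
            simp only [Finset.mem_Iic, Fin.le_def]
            omega
          · intro a ha
            have := Fin.le_def.mp (Finset.mem_Iic.mp ha)
            apply Fin.ext
            simp only [Fin.val_mk]
            omega
          · intro a ha
            simp only [Finset.mem_range] at ha
            simp only [Fin.val_mk]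
            omega
          · intro a _; rfl
      _ ≤ (2 : ℝ) ^ ((n j : ℝ) / q) * C :=
          mul_le_mul_of_nonneg_left (hgeom _) (Real.rpow_nonneg (by norm_num) _)
      _ = C * (2 : ℝ) ^ ((n j : ℝ) / q) := mul_comm _ _
  -- pointwise bound
  have hpoint : ∀ x : ℝ,
      (∑ j, (2 : ℝ) ^ ((n j : ℝ) / q) * (E j).indicator (fun _ => (1 : ℝ)) x) ^ q
        ≤ ∑ j, (C ^ q * (2 : ℝ) ^ (n j)) * (F j).indicator (fun _ => (1 : ℝ)) x := by
    intro x
    classical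
    have hrhs_nonneg : ∀ j : Fin s, (0:ℝ) ≤ (C ^ q * (2 : ℝ) ^ (n j)) *
        (F j).indicator (fun _ => (1 : ℝ)) x := by
      intro j
      apply mul_nonneg (mul_nonneg (Real.rpow_nonneg hC0.le q) (by positivity))
      exact Set.indicator_nonneg (fun _ _ => zero_le_one) x
    by_cases hx : ∃ j, x ∈ E j
    · -- maximal index
      set S : Finset (Fin s) := Finset.univ.filter (fun j => x ∈ E j) with hS
      have hSne : S.Nonempty := by
        obtain ⟨j, hj⟩ := hx
        exact ⟨j, by simp [hS, hj]⟩
      set j₀ : Fin s := S.max' hSne with hj₀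
      have hj₀E : x ∈ E j₀ := by
        have := S.max'_mem hSne
        simpa [hS] using this
      have hj₀F : x ∈ F j₀ := by
        refine ⟨hj₀E, ?_⟩
        simp only [Set.mem_iUnion, not_exists]
        intro k hk hxk
        have : k ∈ S := by simp [hS, hxk]
        exact absurd (S.le_max' k this) (not_le.mpr hk)
      have hsum_nonneg : 0 ≤ ∑ j, (2 : ℝ) ^ ((n j : ℝ) / q) *
          (E j).indicator (fun _ => (1 : ℝ)) x := by
        apply Finset.sum_nonneg
        intro j _
        exact mul_nonneg (Real.rpow_nonneg (by norm_num) _)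
          (Set.indicator_nonneg (fun _ _ => zero_le_one) x)
      have hfle : ∑ j, (2 : ℝ) ^ ((n j : ℝ) / q) * (E j).indicator (fun _ => (1 : ℝ)) x
          ≤ C * (2 : ℝ) ^ ((n j₀ : ℝ) / q) := by
        have h1 : ∑ j, (2 : ℝ) ^ ((n j : ℝ) / q) * (E j).indicator (fun _ => (1 : ℝ)) x
            = ∑ j ∈ S, (2 : ℝ) ^ ((n j : ℝ) / q) := by
          rw [hS, ← Finset.sum_filter_add_sum_filter_not Finset.univ (fun j => x ∈ E j)]
          have h2 : ∑ j ∈ Finset.univ.filter (fun j => ¬ x ∈ E j),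
              (2 : ℝ) ^ ((n j : ℝ) / q) * (E j).indicator (fun _ => (1 : ℝ)) x = 0 := by
            apply Finset.sum_eq_zero
            intro j hj
            simp only [Finset.mem_filter] at hj
            simp [Set.indicator_of_notMem hj.2]
          rw [h2, add_zero]
          apply Finset.sum_congr rfl
          intro j hj
          simp only [Finset.mem_filter] at hj
          simp [Set.indicator_of_mem hj.2]
        rw [h1]
        calc ∑ j ∈ S, (2 : ℝ) ^ ((n j : ℝ) / q)
            ≤ ∑ j ∈ Finset.Iic j₀, (2 : ℝ) ^ ((n j : ℝ) / q) := by
              apply Finset.sum_le_sum_of_subset_of_nonneg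
              · intro j hj
                exact Finset.mem_Iic.mpr (S.le_max' j hj)
              · intro j _ _
                exact Real.rpow_nonneg (by norm_num) _
          _ ≤ C * (2 : ℝ) ^ ((n j₀ : ℝ) / q) := hkey j₀
      calc (∑ j, (2 : ℝ) ^ ((n j : ℝ) / q) * (E j).indicator (fun _ => (1 : ℝ)) x) ^ q
          ≤ (C * (2 : ℝ) ^ ((n j₀ : ℝ) / q)) ^ q :=
            Real.rpow_le_rpow hsum_nonneg hfle hq.le
        _ = C ^ q * (2 : ℝ) ^ (n j₀) := by
            rw [Real.mul_rpow hC0.le (Real.rpow_nonneg (by norm_num) _),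
              ← Real.rpow_mul (by norm_num : (0:ℝ) ≤ 2),
              div_mul_cancel₀ _ hq.ne', Real.rpow_intCast]
        _ = (C ^ q * (2 : ℝ) ^ (n j₀)) * (F j₀).indicator (fun _ => (1 : ℝ)) x := by
            rw [Set.indicator_of_mem hj₀F, mul_one]
        _ ≤ ∑ j, (C ^ q * (2 : ℝ) ^ (n j)) * (F j).indicator (fun _ => (1 : ℝ)) x :=
            Finset.single_le_sum (fun j _ => hrhs_nonneg j) (Finset.mem_univ j₀)
    · push_neg at hx
      have : ∑ j, (2 : ℝ) ^ ((n j : ℝ) / q) * (E j).indicator (fun _ => (1 : ℝ)) x = 0 := by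
        apply Finset.sum_eq_zero
        intro j _
        simp [Set.indicator_of_notMem (hx j)]
      rw [this, Real.zero_rpow hq.ne']
      exact Finset.sum_nonneg fun j _ => hrhs_nonneg j
  -- integrability of the majorant
  have hg_int : IntegrableOn
      (fun x => ∑ j, (C ^ q * (2 : ℝ) ^ (n j)) * (F j).indicator (fun _ => (1 : ℝ)) x)
      (Set.Icc (0:ℝ) 1) volume := by
    apply integrable_finset_sum
    intro j _
    apply Integrable.const_mul
    rw [integrable_indicator_iff (hFmeas j)]
    apply (integrableOn_const_iff (C := (1 : ℝ))).mpr
    right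
    refine lt_of_le_of_lt (Measure.restrict_apply_le _ _) ?_
    refine lt_of_le_of_lt (measure_mono ((hFsub j).trans (hE1 j))) ?_
    simp [Real.volume_Icc]
  -- measurability of f^q
  have hf_meas : Measurable (fun x =>
      (∑ j, (2 : ℝ) ^ ((n j : ℝ) / q) * (E j).indicator (fun _ => (1 : ℝ)) x) ^ q) := by
    have hsum : Measurable (fun x => ∑ j, (2 : ℝ) ^ ((n j : ℝ) / q) *
        (E j).indicator (fun _ => (1 : ℝ)) x) :=
      Finset.measurable_sum _ fun j _ => (measurable_const.indicator (hE j)).const_mul _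
    exact (Real.continuous_rpow_const hq.le).measurable.comp hsum
  have hf_int : IntegrableOn
      (fun x => (∑ j, (2 : ℝ) ^ ((n j : ℝ) / q) * (E j).indicator (fun _ => (1 : ℝ)) x) ^ q)
      (Set.Icc (0:ℝ) 1) volume := by
    apply Integrable.mono' hg_int (hf_meas.aestronglyMeasurable)
    filter_upwards with x
    rw [Real.norm_eq_abs, abs_of_nonneg]
    · exact hpoint x
    · apply Real.rpow_nonneg
      apply Finset.sum_nonneg
      intro j _
      exact mul_nonneg (Real.rpow_nonneg (by norm_num) _)
        (Set.indicator_nonneg (fun _ _ => zero_le_one) x)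
  calc ∫ x in Set.Icc (0 : ℝ) 1,
        (∑ j, (2 : ℝ) ^ ((n j : ℝ) / q) * (E j).indicator (fun _ => (1 : ℝ)) x) ^ q
      ≤ ∫ x in Set.Icc (0 : ℝ) 1,
        ∑ j, (C ^ q * (2 : ℝ) ^ (n j)) * (F j).indicator (fun _ => (1 : ℝ)) x :=
        setIntegral_mono_on hf_int hg_int measurableSet_Icc (fun x _ => hpoint x)
    _ = ∑ j, ∫ x in Set.Icc (0 : ℝ) 1,
        (C ^ q * (2 : ℝ) ^ (n j)) * (F j).indicator (fun _ => (1 : ℝ)) x := by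
        apply integral_finset_sum
        intro j _
        apply Integrable.const_mul
        rw [integrable_indicator_iff (hFmeas j)]
        apply (integrableOn_const_iff (C := (1 : ℝ))).mpr
        right
        refine lt_of_le_of_lt (Measure.restrict_apply_le _ _) ?_
        refine lt_of_le_of_lt (measure_mono ((hFsub j).trans (hE1 j))) ?_
        simp [Real.volume_Icc]
    _ ≤ ∑ j, (C ^ q * (2 : ℝ) ^ (n j)) * (volume (E j)).toReal := by
        apply Finset.sum_le_sum
        intro j _
        rw [integral_const_mul, setIntegral_indicator (hFmeas j)]
        rw [setIntegral_const, smul_eq_mul, mul_one]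
        apply mul_le_mul_of_nonneg_left _ (mul_nonneg (Real.rpow_nonneg hC0.le q)
          (by positivity))
        apply ENNReal.toReal_mono
        · exact ((measure_mono (hE1 j)).trans_lt (by simp [Real.volume_Icc])).ne
        · exact measure_mono (Set.inter_subset_right.trans (hFsub j))
    _ = C ^ q * ∑ j, (2 : ℝ) ^ (n j) * (volume (E j)).toReal := by
        rw [Finset.mul_sum]
        apply Finset.sum_congr rfl
        intro j _
        ring
    _ = (1 / (1 - (1 / 2 : ℝ) ^ (1 / q))) ^ q *
        ∑ j, (2 : ℝ) ^ (n j) * (volume (E j)).toReal := rfl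
end

section
/- Let d ∈ ℕ, d ≥ 1, let n_1 < n_2 < ⋯ < n_s be integers and let E_1, …, E_s ⊆ [0,1]^d be Lebesgue-measurable sets. Then for any 0 < q < ∞, ∫_{[0,1]^d} (Σ_{j=1}^s 2^{n_j d/q} χ_{E_j}(x))^q dx ≤ (1/(1 − (1/2)^{d/q}))^q · Σ_{j=1}^s 2^{n_j d} |E_j|, where |E_j| denotes the d-dimensional Lebesgue measure of E_j. -/
open MeasureTheory

/-- For `d ≥ 1`, integers `n_1 < ⋯ < n_s`, measurable sets
`E_1, …, E_s ⊆ [0,1]^d` and any `0 < q < ∞`,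
`∫_{[0,1]^d} (∑_j 2^{n_j d/q} χ_{E_j}(x))^q dx ≤ (1/(1 − (1/2)^{d/q}))^q · ∑_j 2^{n_j d} |E_j|`. -/
theorem indicator_sum_integral_bound_multi (d : ℕ) (hd : 1 ≤ d) (s : ℕ)
    (n : Fin s → ℤ) (hn : StrictMono n)
    (E : Fin s → Set (Fin d → ℝ)) (hE : ∀ j, MeasurableSet (E j))
    (hE1 : ∀ j, E j ⊆ Set.univ.pi fun _ => Set.Icc 0 1)
    (q : ℝ) (hq : 0 < q) :
    ∫ x in (Set.univ.pi fun _ => Set.Icc (0 : ℝ) 1),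
        (∑ j, (2 : ℝ) ^ ((n j : ℝ) * d / q) * (E j).indicator (fun _ => (1 : ℝ)) x) ^ q ≤
      (1 / (1 - (1 / 2 : ℝ) ^ ((d : ℝ) / q))) ^ q *
        ∑ j, (2 : ℝ) ^ (n j * d) * (volume (E j)).toReal := by
  classical
  have h2 : (0:ℝ) < 2 := two_pos
  have hd0 : (0:ℝ) < (d:ℝ) := by exact_mod_cast hd
  have hdq : 0 < (d:ℝ)/q := div_pos hd0 hq
  set cube : Set (Fin d → ℝ) := Set.univ.pi fun _ => Set.Icc (0:ℝ) 1 with hcube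
  set r : ℝ := (1/2 : ℝ) ^ ((d:ℝ)/q) with hrdef
  have hr0 : 0 < r := Real.rpow_pos_of_pos (by norm_num) _
  have hr1 : r < 1 := Real.rpow_lt_one (by norm_num) (by norm_num) hdq
  set C : ℝ := 1 / (1 - r) with hCdef
  have hC0 : 0 < C := by
    apply div_pos one_pos; linarith
  -- geometric sum bound
  have hgeom : ∑ k ∈ Finset.range s, r ^ k ≤ C := by
    have h1 : ∑ k ∈ Finset.range s, r ^ k ≤ ∑' k : ℕ, r ^ k :=
      Summable.sum_le_tsum _ (fun i _ => (pow_nonneg hr0.le i))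
        (summable_geometric_of_lt_one hr0.le hr1)
    rw [tsum_geometric_of_lt_one hr0.le hr1] at h1
    rw [hCdef, one_div]
    exact h1
  -- gap lemma from strict monotonicity
  have mono_gap : ∀ (k : ℕ) (a b : Fin s), (b:ℕ) = (a:ℕ) + k → (k:ℤ) ≤ n b - n a := by
    intro k
    induction k with
    | zero =>
      intro a b h
      have : a = b := Fin.ext (by omega)
      subst this; simp
    | succ k ih =>
      intro a b h
      have hb : (a:ℕ) + k < s := by omega
      have h1 := ih a ⟨(a:ℕ) + k, hb⟩ rfl
      have h2 : (⟨(a:ℕ) + k, hb⟩ : Fin s) < b := by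
        rw [Fin.lt_def]; simp; omega
      have h3 := hn h2
      push_cast
      omega
  -- pointwise key bound
  have key : ∀ x : Fin d → ℝ,
      (∑ j, (2 : ℝ) ^ ((n j : ℝ) * d / q) * (E j).indicator (fun _ => (1 : ℝ)) x) ^ q
        ≤ C ^ q * ∑ j, (2 : ℝ) ^ (n j * d) * (E j).indicator (fun _ => (1 : ℝ)) x := by
    intro x
    set J : Finset (Fin s) := Finset.univ.filter (fun j => x ∈ E j) with hJ
    have hsum1 : (∑ j, (2 : ℝ) ^ ((n j : ℝ) * d / q) * (E j).indicator (fun _ => (1 : ℝ)) x)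
        = ∑ j ∈ J, (2 : ℝ) ^ ((n j : ℝ) * d / q) := by
      rw [hJ, Finset.sum_filter]
      refine Finset.sum_congr rfl fun j _ => ?_
      by_cases h : x ∈ E j <;> simp [Set.indicator, h]
    have hsum2 : (∑ j, (2 : ℝ) ^ (n j * d) * (E j).indicator (fun _ => (1 : ℝ)) x)
        = ∑ j ∈ J, (2 : ℝ) ^ (n j * d) := by
      rw [hJ, Finset.sum_filter]
      refine Finset.sum_congr rfl fun j _ => ?_
      by_cases h : x ∈ E j <;> simp [Set.indicator, h]
    rw [hsum1, hsum2]
    rcases J.eq_empty_or_nonempty with hJe | hJne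
    · rw [hJe]
      simp [Real.zero_rpow hq.ne']
    · set m : Fin s := J.max' hJne with hm
      have hmJ : m ∈ J := J.max'_mem hJne
      have step1 : ∑ j ∈ J, (2 : ℝ) ^ ((n j : ℝ) * d / q)
          ≤ (2 : ℝ) ^ ((n m : ℝ) * d / q) * ∑ j ∈ J, r ^ ((m:ℕ) - (j:ℕ)) := by
        rw [Finset.mul_sum]
        refine Finset.sum_le_sum fun j hj => ?_
        have hjm : (j:ℕ) ≤ (m:ℕ) := J.le_max' j hj
        have hgap : (((m:ℕ) - (j:ℕ) : ℕ) : ℤ) ≤ n m - n j := by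
          refine mono_gap _ j m ?_
          omega
        have hrk : r ^ ((m:ℕ) - (j:ℕ)) = (2:ℝ) ^ (-((((m:ℕ) - (j:ℕ) : ℕ):ℝ)) * ((d:ℝ)/q)) := by
          rw [hrdef, ← Real.rpow_natCast ((1/2:ℝ) ^ ((d:ℝ)/q)) _, ← Real.rpow_mul (by norm_num),
            show (1/2:ℝ) = 2⁻¹ by norm_num, ← Real.rpow_neg_one 2,
            ← Real.rpow_mul h2.le]
          ring_nf
        rw [hrk, ← Real.rpow_add h2, Real.rpow_le_rpow_left_iff one_lt_two]
        have hnj : (n j : ℝ) ≤ (n m : ℝ) - ((((m:ℕ) - (j:ℕ) : ℕ)):ℝ) := by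
          have : (n j : ℤ) ≤ n m - (((m:ℕ) - (j:ℕ) : ℕ):ℤ) := by omega
          exact_mod_cast this
        rw [mul_div_assoc, mul_div_assoc]
        nlinarith [mul_le_mul_of_nonneg_right hnj hdq.le]
      have step2 : ∑ j ∈ J, r ^ ((m:ℕ) - (j:ℕ)) ≤ C := by
        have hinj : ∀ a ∈ J, ∀ b ∈ J, (m:ℕ) - (a:ℕ) = (m:ℕ) - (b:ℕ) → a = b := by
          intro a ha b hb hab
          have h1 : (a:ℕ) ≤ (m:ℕ) := J.le_max' a ha
          have h2 : (b:ℕ) ≤ (m:ℕ) := J.le_max' b hb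
          exact Fin.ext (by omega)
        calc ∑ j ∈ J, r ^ ((m:ℕ) - (j:ℕ))
            = ∑ k ∈ J.image (fun j : Fin s => (m:ℕ) - (j:ℕ)), r ^ k :=
              (Finset.sum_image hinj).symm
          _ ≤ ∑ k ∈ Finset.range s, r ^ k := by
              refine Finset.sum_le_sum_of_subset_of_nonneg ?_
                (fun k _ _ => pow_nonneg hr0.le k)
              intro k hk
              simp only [Finset.mem_image] at hk
              obtain ⟨j, _, hjk⟩ := hk
              rw [Finset.mem_range]
              omega
          _ ≤ C := hgeom
      have hSnn : 0 ≤ ∑ j ∈ J, (2:ℝ) ^ ((n j : ℝ) * d / q) :=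
        Finset.sum_nonneg fun j _ => (Real.rpow_pos_of_pos h2 _).le
      have hSle : ∑ j ∈ J, (2:ℝ) ^ ((n j : ℝ) * d / q)
          ≤ (2:ℝ) ^ ((n m : ℝ) * d / q) * C := by
        calc ∑ j ∈ J, (2:ℝ) ^ ((n j : ℝ) * d / q)
            ≤ (2 : ℝ) ^ ((n m : ℝ) * d / q) * ∑ j ∈ J, r ^ ((m:ℕ) - (j:ℕ)) := step1
          _ ≤ (2:ℝ) ^ ((n m : ℝ) * d / q) * C :=
              mul_le_mul_of_nonneg_left step2 (Real.rpow_pos_of_pos h2 _).le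
      have h4 : (∑ j ∈ J, (2:ℝ) ^ ((n j : ℝ) * d / q)) ^ q
          ≤ ((2:ℝ) ^ ((n m : ℝ) * d / q) * C) ^ q :=
        Real.rpow_le_rpow hSnn hSle hq.le
      rw [Real.mul_rpow (Real.rpow_pos_of_pos h2 _).le hC0.le] at h4
      have ha : ((2:ℝ) ^ ((n m : ℝ) * d / q)) ^ q = (2:ℝ) ^ (n m * (d:ℤ)) := by
        rw [← Real.rpow_mul h2.le, div_mul_cancel₀ _ hq.ne', ← Real.rpow_intCast 2 (n m * d)]
        push_cast
        ring_nf
      rw [ha] at h4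
      have h5 : (2:ℝ) ^ (n m * (d:ℤ)) ≤ ∑ j ∈ J, (2:ℝ) ^ (n j * (d:ℤ)) :=
        Finset.single_le_sum (f := fun j => (2:ℝ) ^ (n j * (d:ℤ)))
          (fun j _ => (zpow_pos h2 _).le) hmJ
      calc (∑ j ∈ J, (2:ℝ) ^ ((n j : ℝ) * d / q)) ^ q
          ≤ (2:ℝ) ^ (n m * (d:ℤ)) * C ^ q := h4
        _ ≤ (∑ j ∈ J, (2:ℝ) ^ (n j * (d:ℤ))) * C ^ q :=
            mul_le_mul_of_nonneg_right h5 (Real.rpow_nonneg hC0.le q)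
        _ = C ^ q * ∑ j ∈ J, (2:ℝ) ^ (n j * (d:ℤ)) := mul_comm _ _
  -- integration
  have hEfin : ∀ j, volume (E j) < ⊤ := by
    intro j
    have hcv : volume cube = 1 := by
      rw [hcube, volume_pi_pi]
      simp [Real.volume_Icc]
    calc volume (E j) ≤ volume cube := measure_mono (hE1 j)
      _ = 1 := hcv
      _ < ⊤ := by norm_num
  have hIntInd : ∀ j, IntegrableOn ((E j).indicator (fun _ => (1:ℝ))) cube volume := by
    intro j
    apply Integrable.integrableOn
    rw [integrable_indicator_iff (hE j)]
    exact integrableOn_const (hEfin j).ne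
  have hIntg : IntegrableOn
      (fun x => ∑ j, (2:ℝ) ^ (n j * (d:ℤ)) * (E j).indicator (fun _ => (1:ℝ)) x) cube volume := by
    apply integrable_finset_sum
    intro j _
    exact ((hIntInd j).const_mul _)
  have hcalc : ∀ j, ∫ x in cube, (E j).indicator (fun _ => (1:ℝ)) x = (volume (E j)).toReal := by
    intro j
    rw [integral_indicator (hE j), setIntegral_const, measureReal_restrict_apply (hE j),
      Set.inter_eq_self_of_subset_left (hE1 j), smul_eq_mul, mul_one, measureReal_def]
  have hle : ∫ x in cube,
      (∑ j, (2 : ℝ) ^ ((n j : ℝ) * d / q) * (E j).indicator (fun _ => (1 : ℝ)) x) ^ q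
      ≤ ∫ x in cube,
        C ^ q * ∑ j, (2:ℝ) ^ (n j * (d:ℤ)) * (E j).indicator (fun _ => (1:ℝ)) x := by
    refine integral_mono_of_nonneg (Filter.Eventually.of_forall fun x => ?_)
      (hIntg.const_mul _) (Filter.Eventually.of_forall key)
    exact Real.rpow_nonneg (Finset.sum_nonneg fun j _ =>
      mul_nonneg (Real.rpow_pos_of_pos h2 _).le
        (Set.indicator_nonneg (fun _ _ => zero_le_one) x)) q
  calc ∫ x in cube,
      (∑ j, (2 : ℝ) ^ ((n j : ℝ) * d / q) * (E j).indicator (fun _ => (1 : ℝ)) x) ^ q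
      ≤ ∫ x in cube,
        C ^ q * ∑ j, (2:ℝ) ^ (n j * (d:ℤ)) * (E j).indicator (fun _ => (1:ℝ)) x := hle
    _ = C ^ q * ∫ x in cube,
        ∑ j, (2:ℝ) ^ (n j * (d:ℤ)) * (E j).indicator (fun _ => (1:ℝ)) x := by
        rw [integral_const_mul]
    _ = C ^ q * ∑ j, (2:ℝ) ^ (n j * (d:ℤ)) * (volume (E j)).toReal := by
        rw [integral_finset_sum _ (fun j _ => ((hIntInd j).const_mul _))]
        congr 1
        refine Finset.sum_congr rfl fun j _ => ?_
        rw [integral_const_mul, hcalc j]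
end

section
/- Let d ∈ ℕ, d ≥ 2, let 1 < p < ∞, and fix a nonzero vertex e of [0,1]^d. For any f ∈ L^p([0,1]^d), the sequence of partial sums of the series Σ_{k≥0} Σ_{2^k ≤ j_i ≤ 2^{k+1}−1, i=1,…,d} (f, Ψ^e_{j,k}) Ψ^e_{j,k}, along the natural enumeration of the functions Ψ^e_{j,k} (ordered by generation k and, within each generation, in a fixed order of the indices j), is a martingale on the probability space ([0,1]^d, B([0,1]^d), Lebesgue measure) with respect to the filtration F_n generated by the first n+1 of these functions; that is, each partial sum is F_n-measurable and E(d_{n+1} | F_n) = 0 almost everywhere, where d_n denotes the n-th term of the series. -/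
open MeasureTheory

/-- A nonzero vertex `e` of the cube `[0,1]^d` (a nonzero 0-1 vector of length `d`). -/
abbrev MVertex (d : ℕ) : Type := { e : Fin d → Bool // e ≠ fun _ => false }

/-- Index of the multivariate Haar system on `[0,1]^d`: `none` stands for `Ψ^* = 1`, and
`some (e, ⟨k, j⟩)` (with `e` a nonzero vertex, `k ≥ 0` a generation and `j` a `d`-tuple of
zero-based positions `< 2^k`) stands for `Ψ^e_{j,k}`. -/
abbrev MHIdx (d : ℕ) : Type := Option (MVertex d × ((k : ℕ) × (Fin d → Fin (2 ^ k))))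

/-- `φ = χ_{[0,1)}`. -/
noncomputable def phiH : ℝ → ℝ := fun y => if 0 ≤ y ∧ y < 1 then 1 else 0

/-- The mother Haar function `Ψ_{0,0}(y) = φ(2y) − φ(2y−1)`. -/
noncomputable def psiH : ℝ → ℝ := fun y => phiH (2 * y) - phiH (2 * y - 1)

/-- The multivariate Haar functions: `mhaarFun none = Ψ^* = 1` on `[0,1]^d`, and
`mhaarFun (some (e, ⟨k, j⟩)) = Ψ^e_{j,k} = 2^{kd/2} ∏_i Ψ^{e_i}(2^k x_i − j_i)`, where
`Ψ^0 = φ` and `Ψ^1 = Ψ_{0,0}`. -/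
noncomputable def mhaarFun {d : ℕ} : MHIdx d → (Fin d → ℝ) → ℝ
  | none => fun _ => 1
  | some (e, ⟨k, j⟩) => fun x =>
      (2 : ℝ) ^ (((k * d : ℕ) : ℝ) / 2) *
        ∏ i, (if e.1 i then psiH else phiH) ((2 : ℝ) ^ k * x i - (j i : ℝ))

/-- The unit cube `[0,1]^d` (dyadic version). -/
def unitCube (d : ℕ) : Set (Fin d → ℝ) := Set.univ.pi fun _ => Set.Ico 0 1

/-- The `L^p([0,1]^d)` norm. -/
noncomputable def mlpNorm (d : ℕ) (p : ℝ) (f : (Fin d → ℝ) → ℝ) : ℝ :=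
  (∫ x in unitCube d, |f x| ^ p) ^ (1 / p)

/-- The Haar coefficient `c_I(g) = ∫_{[0,1]^d} g · H_I`. -/
noncomputable def mhaarCoef (d : ℕ) (g : (Fin d → ℝ) → ℝ) (I : MHIdx d) : ℝ :=
  ∫ x in unitCube d, g x * mhaarFun I x

/-- The projector `S_Q(g) = ∑_{I ∈ Q} c_I(g) H_I`. -/
noncomputable def mhaarProj (d : ℕ) (Q : Finset (MHIdx d)) (g : (Fin d → ℝ) → ℝ) :
    (Fin d → ℝ) → ℝ :=
  fun x => ∑ I ∈ Q, mhaarCoef d g I * mhaarFun I x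

/-- The best `m`-term approximation error `σ_m(g)_p` for the multivariate Haar system. -/
noncomputable def mBestApprox (d : ℕ) (p : ℝ) (m : ℕ) (g : (Fin d → ℝ) → ℝ) : ℝ :=
  sInf { t : ℝ | ∃ (Λ : Finset (MHIdx d)) (a : MHIdx d → ℝ),
    Λ.card = m ∧ t = mlpNorm d p (fun x => g x - ∑ I ∈ Λ, a I * mhaarFun I x) }

/-- `Λm` is a greedy set for `g`: the `c_I(g,p) = ‖c_I(g) H_I‖_p` over `Λm` dominate all
others. -/
def MIsGreedy (d : ℕ) (p : ℝ) (g : (Fin d → ℝ) → ℝ) (Λm : Finset (MHIdx d)) : Prop :=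
  ∀ I ∈ Λm, ∀ J ∉ Λm,
    mlpNorm d p (fun x => mhaarCoef d g J * mhaarFun J x) ≤
      mlpNorm d p (fun x => mhaarCoef d g I * mhaarFun I x)

/-- The filtration `F_n` generated by the first `n + 1` functions `Ψ^e_{j,k}` along an
enumeration `idx` of the indices `(k, j)`. -/
noncomputable def mhaarFilt (d : ℕ) (e : MVertex d)
    (idx : ℕ ≃ ((k : ℕ) × (Fin d → Fin (2 ^ k)))) (n : ℕ) :
    MeasurableSpace (Fin d → ℝ) :=
  ⨆ i ∈ Finset.range (n + 1),
    MeasurableSpace.comap (mhaarFun (some (e, idx i))) inferInstance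

namespace MHAux

lemma phiH_def (y : ℝ) : phiH y = if 0 ≤ y ∧ y < 1 then 1 else 0 := rfl

lemma phiH_zero {y : ℝ} (h : ¬ (0 ≤ y ∧ y < 1)) : phiH y = 0 := if_neg h

lemma psiH_zero {y : ℝ} (h : ¬ (0 ≤ y ∧ y < 1)) : psiH y = 0 := by
  have h' : y < 0 ∨ 1 ≤ y := by
    rcases not_and_or.mp h with h | h
    · exact Or.inl (not_le.mp h)
    · exact Or.inr (not_lt.mp h)
  unfold psiH
  rcases h' with h | h
  · rw [phiH_zero (fun hh => by linarith [hh.1]), phiH_zero (fun hh => by linarith [hh.1])]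
    ring
  · rw [phiH_zero (fun hh => by linarith [hh.2]), phiH_zero (fun hh => by linarith [hh.2])]
    ring

lemma phiH_of_half {m : ℤ} {y : ℝ} (h1 : (m : ℝ) ≤ 2 * y) (h2 : 2 * y < m + 1) :
    phiH y = if 0 ≤ m ∧ m ≤ 1 then 1 else 0 := by
  rw [phiH_def]
  by_cases hy : 0 ≤ y ∧ y < 1
  · rw [if_pos hy, if_pos]
    constructor
    · have : (-1 : ℝ) < m := by linarith [hy.1]
      have : (-1 : ℤ) < m := by exact_mod_cast this
      omega
    · have : (m : ℝ) < 2 := by linarith [hy.2]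
      have : m < (2 : ℤ) := by exact_mod_cast this
      omega
  · rw [if_neg hy, if_neg]
    intro hm
    apply hy
    have hm0 : (0 : ℝ) ≤ m := by exact_mod_cast hm.1
    have hm1 : (m : ℝ) ≤ 1 := by exact_mod_cast hm.2
    exact ⟨by linarith, by linarith⟩

lemma psiH_of_half {m : ℤ} {y : ℝ} (h1 : (m : ℝ) ≤ 2 * y) (h2 : 2 * y < m + 1) :
    psiH y = if m = 0 then 1 else if m = 1 then -1 else 0 := by
  have c1 : (0 ≤ 2 * y ∧ 2 * y < 1) ↔ m = 0 := by
    constructor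
    · rintro ⟨a, b⟩
      have hm1 : (m : ℝ) < 1 := lt_of_le_of_lt h1 b
      have hm2 : (0 : ℝ) < (m : ℝ) + 1 := lt_of_le_of_lt a h2
      have : m < (1 : ℤ) := by exact_mod_cast hm1
      have : (0 : ℤ) < m + 1 := by exact_mod_cast hm2
      omega
    · rintro rfl
      push_cast at h1 h2
      exact ⟨by linarith, by linarith⟩
  have c2 : (0 ≤ 2 * y - 1 ∧ 2 * y - 1 < 1) ↔ m = 1 := by
    constructor
    · rintro ⟨a, b⟩
      have hm1 : (m : ℝ) < 2 := lt_of_le_of_lt h1 (by linarith)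
      have hm2 : (1 : ℝ) < (m : ℝ) + 1 := lt_of_le_of_lt (by linarith) h2
      have : m < (2 : ℤ) := by exact_mod_cast hm1
      have : (1 : ℤ) < m + 1 := by exact_mod_cast hm2
      omega
    · rintro rfl
      push_cast at h1 h2
      exact ⟨by linarith, by linarith⟩
  unfold psiH
  rw [phiH_def, phiH_def]
  rcases eq_or_ne m 0 with rfl | hm0
  · rw [if_pos (c1.mpr rfl), if_neg (fun h => absurd (c2.mp h) (by norm_num)), if_pos rfl]
    norm_num
  · rcases eq_or_ne m 1 with rfl | hm1
    · rw [if_neg (fun h => absurd (c1.mp h) (by norm_num)), if_pos (c2.mpr rfl),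
        if_neg (by norm_num), if_pos rfl]
      norm_num
    · rw [if_neg (fun h => hm0 (c1.mp h)), if_neg (fun h => hm1 (c2.mp h)),
        if_neg hm0, if_neg hm1]
      norm_num

end MHAux

namespace MHAux2

open MHAux

def inCube {d k : ℕ} (j : Fin d → Fin (2 ^ k)) (x : Fin d → ℝ) : Prop :=
  ∀ i, (j i : ℝ) ≤ 2 ^ k * x i ∧ 2 ^ k * x i < (j i : ℝ) + 1

lemma mhaarFun_apply {d k : ℕ} (e : MVertex d) (j : Fin d → Fin (2 ^ k)) (x : Fin d → ℝ) :
    mhaarFun (some (e, ⟨k, j⟩)) x =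
      (2 : ℝ) ^ (((k * d : ℕ) : ℝ) / 2) *
        ∏ i, (if e.1 i then psiH else phiH) ((2 : ℝ) ^ k * x i - (j i : ℝ)) := rfl

lemma factor_zero {b : Bool} {y : ℝ} (h : ¬ (0 ≤ y ∧ y < 1)) :
    (if b then psiH else phiH) y = 0 := by
  cases b
  · simpa using phiH_zero h
  · simpa using psiH_zero h

lemma factor_of_half {b : Bool} {m : ℤ} {y y' : ℝ} (h1 : (m : ℝ) ≤ 2 * y) (h2 : 2 * y < m + 1)
    (h1' : (m : ℝ) ≤ 2 * y') (h2' : 2 * y' < m + 1) :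
    (if b then psiH else phiH) y = (if b then psiH else phiH) y' := by
  cases b
  · simpa using (phiH_of_half h1 h2).trans (phiH_of_half h1' h2').symm
  · simpa using (psiH_of_half h1 h2).trans (psiH_of_half h1' h2').symm

lemma mhaarFun_eq_zero {d k : ℕ} (e : MVertex d) (j : Fin d → Fin (2 ^ k)) {x : Fin d → ℝ}
    (hx : ¬ inCube j x) : mhaarFun (some (e, ⟨k, j⟩)) x = 0 := by
  obtain ⟨i, hi⟩ := not_forall.mp hx
  rw [mhaarFun_apply, Finset.prod_eq_zero (Finset.mem_univ i), mul_zero]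
  apply factor_zero
  rintro ⟨a, b⟩
  exact hi ⟨by linarith, by linarith⟩

lemma inCube_subset_unitCube {d k : ℕ} (j : Fin d → Fin (2 ^ k)) {x : Fin d → ℝ}
    (hx : inCube j x) : x ∈ unitCube d := by
  rw [unitCube, Set.mem_univ_pi]
  intro i
  obtain ⟨a, b⟩ := hx i
  have h2k : (0 : ℝ) < 2 ^ k := by positivity
  have hj0 : (0 : ℝ) ≤ (j i : ℝ) := by positivity
  have hjlt : (j i : ℝ) + 1 ≤ 2 ^ k := by
    have h := (j i).2
    have : ((j i : ℕ) : ℝ) + 1 ≤ ((2 ^ k : ℕ) : ℝ) := by exact_mod_cast Nat.succ_le_of_lt h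
    push_cast at this
    simpa using this
  constructor
  · by_contra h
    push_neg at h
    nlinarith [mul_pos h2k (neg_pos.mpr h)]
  · by_contra h
    push_neg at h
    nlinarith [mul_le_mul_of_nonneg_left h (le_of_lt h2k)]

lemma half_bounds {d k k' : ℕ} (j : Fin d → Fin (2 ^ k)) (j' : Fin d → Fin (2 ^ k'))
    (hlt : k < k') (i : Fin d) {x : Fin d → ℝ} (hx : inCube j' x) :
    (((((j' i : ℕ) / 2 ^ (k' - k - 1) : ℕ) : ℤ) - 2 * ((j i : ℕ) : ℤ) : ℤ) : ℝ)
        ≤ 2 * ((2 : ℝ) ^ k * x i - (j i : ℝ)) ∧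
      2 * ((2 : ℝ) ^ k * x i - (j i : ℝ))
        < (((((j' i : ℕ) / 2 ^ (k' - k - 1) : ℕ) : ℤ) - 2 * ((j i : ℕ) : ℤ) : ℤ) : ℝ) + 1 := by
  set s := k' - k - 1 with hs
  set q := (j' i : ℕ) / 2 ^ s with hq
  have hk' : k' = k + 1 + s := by omega
  have h2s : (0 : ℝ) < 2 ^ s := by positivity
  have hq1 : ((q : ℝ)) * 2 ^ s ≤ ((j' i : ℕ) : ℝ) := by
    exact_mod_cast Nat.div_mul_le_self (j' i : ℕ) (2 ^ s)
  have hq2 : ((j' i : ℕ) : ℝ) + 1 ≤ ((q : ℝ) + 1) * 2 ^ s := by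
    have h1 : (j' i : ℕ) + 1 ≤ (q + 1) * 2 ^ s := by
      have := Nat.lt_mul_div_succ (j' i : ℕ) (b := 2 ^ s) (by positivity)
      calc (j' i : ℕ) + 1 ≤ 2 ^ s * (q + 1) := this
        _ = (q + 1) * 2 ^ s := by ring
    exact_mod_cast h1
  obtain ⟨a, b⟩ := hx i
  have e1 : (2 : ℝ) ^ k' * x i = (2 ^ (k + 1) * x i) * 2 ^ s := by
    rw [hk', pow_add, pow_add]; ring
  rw [e1] at a b
  have hz1 : (q : ℝ) ≤ 2 ^ (k + 1) * x i := by
    refine le_of_mul_le_mul_right ?_ h2s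
    calc (q : ℝ) * 2 ^ s ≤ ((j' i : ℕ) : ℝ) := hq1
      _ ≤ 2 ^ (k + 1) * x i * 2 ^ s := a
  have hz2 : 2 ^ (k + 1) * x i < (q : ℝ) + 1 := by
    refine lt_of_mul_lt_mul_right ?_ (le_of_lt h2s)
    calc 2 ^ (k + 1) * x i * 2 ^ s < ((j' i : ℕ) : ℝ) + 1 := b
      _ ≤ ((q : ℝ) + 1) * 2 ^ s := hq2
  have hp : (2 : ℝ) ^ (k + 1) = 2 * 2 ^ k := by rw [pow_succ]; ring
  constructor
  · push_cast
    rw [hp] at hz1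
    linarith
  · push_cast
    rw [hp] at hz2
    linarith

lemma mhaarFun_const_on {d : ℕ} (e : MVertex d) {k k' : ℕ} (j : Fin d → Fin (2 ^ k))
    (j' : Fin d → Fin (2 ^ k'))
    (hne : (⟨k, j⟩ : (k : ℕ) × (Fin d → Fin (2 ^ k))) ≠ ⟨k', j'⟩) (hk : k ≤ k')
    {x x' : Fin d → ℝ} (hx : inCube j' x) (hx' : inCube j' x') :
    mhaarFun (some (e, ⟨k, j⟩)) x = mhaarFun (some (e, ⟨k, j⟩)) x' := by
  rcases eq_or_lt_of_le hk with rfl | hlt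
  · have hj : j ≠ j' := by
      intro h; exact hne (by rw [h])
    obtain ⟨i, hij⟩ := Function.ne_iff.mp hj
    have key : ∀ z : Fin d → ℝ, inCube j' z → ¬ inCube j z := by
      intro z hz hzj
      obtain ⟨a1, b1⟩ := hz i
      obtain ⟨a2, b2⟩ := hzj i
      have hne' : (j i : ℕ) ≠ (j' i : ℕ) := fun h => hij (Fin.ext h)
      rcases lt_or_gt_of_ne hne' with h | h
      · have : ((j i : ℕ) : ℝ) + 1 ≤ ((j' i : ℕ) : ℝ) := by exact_mod_cast h
        linarith
      · have : ((j' i : ℕ) : ℝ) + 1 ≤ ((j i : ℕ) : ℝ) := by exact_mod_cast h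
        linarith
    rw [mhaarFun_eq_zero e j (key x hx), mhaarFun_eq_zero e j (key x' hx')]
  · rw [mhaarFun_apply, mhaarFun_apply]
    congr 1
    apply Finset.prod_congr rfl
    intro i _
    obtain ⟨h1, h2⟩ := half_bounds j j' hlt i hx
    obtain ⟨h1', h2'⟩ := half_bounds j j' hlt i hx'
    exact factor_of_half h1 h2 h1' h2'

end MHAux2

namespace MHAux3

open MHAux MHAux2

/-- The σ-algebra of sets that either contain `Q` or are disjoint from it. -/
def sideAlg {α : Type*} (Q : Set α) : MeasurableSpace α where
  MeasurableSet' s := Q ⊆ s ∨ Disjoint Q s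
  measurableSet_empty := Or.inr disjoint_bot_right
  measurableSet_compl s hs := by
    rcases hs with h | h
    · exact Or.inr (Set.disjoint_compl_right_iff_subset.mpr h)
    · exact Or.inl (Set.subset_compl_iff_disjoint_right.mpr h)
  measurableSet_iUnion f hf := by
    by_cases h : ∃ n, Q ⊆ f n
    · obtain ⟨n, hn⟩ := h
      exact Or.inl (hn.trans (Set.subset_iUnion f n))
    · push_neg at h
      refine Or.inr (Set.disjoint_iUnion_right.mpr fun n => ?_)
      rcases hf n with hh | hh
      · exact absurd hh (h n)
      · exact hh

lemma comap_le_sideAlg {α β : Type*} [mβ : MeasurableSpace β] {g : α → β} {Q : Set α}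
    (hg : ∀ x ∈ Q, ∀ y ∈ Q, g x = g y) :
    MeasurableSpace.comap g mβ ≤ sideAlg Q := by
  rintro s ⟨B, _, rfl⟩
  by_cases hQ : ∃ x ∈ Q, g x ∈ B
  · obtain ⟨x0, hx0, hgx0⟩ := hQ
    exact Or.inl fun y hy => by
      show g y ∈ B
      rw [hg y hy x0 hx0]; exact hgx0
  · refine Or.inr (Set.disjoint_left.mpr fun y hy hyB => hQ ⟨y, hy, hyB⟩)

lemma measurable_phiH : Measurable phiH := by
  have h : phiH = (Set.Ico (0 : ℝ) 1).indicator (fun _ => 1) := by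
    funext y
    simp [phiH, Set.indicator, Set.mem_Ico]
  rw [h]
  exact measurable_const.indicator measurableSet_Ico

lemma measurable_psiH : Measurable psiH :=
  (measurable_phiH.comp (measurable_const_mul 2)).sub
    (measurable_phiH.comp ((measurable_const_mul 2).sub measurable_const))

lemma measurable_factor (b : Bool) : Measurable (if b then psiH else phiH) := by
  cases b
  · simpa using measurable_phiH
  · simpa using measurable_psiH

lemma measurable_mhaarFun {d : ℕ} (I : MHIdx d) : Measurable (mhaarFun I) := by
  match I with
  | none => exact measurable_const
  | some (e, ⟨k, j⟩) =>
    have : mhaarFun (some (e, ⟨k, j⟩)) = fun x : Fin d → ℝ =>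
        (2 : ℝ) ^ (((k * d : ℕ) : ℝ) / 2) *
          ∏ i, (if e.1 i then psiH else phiH) ((2 : ℝ) ^ k * x i - (j i : ℝ)) := rfl
    rw [this]
    refine Measurable.const_mul ?_ _
    refine Finset.measurable_prod _ fun i _ => ?_
    exact (measurable_factor (e.1 i)).comp
      (((measurable_pi_apply i).const_mul _).sub measurable_const)

lemma abs_factor_le (b : Bool) (y : ℝ) : |(if b then psiH else phiH) y| ≤ 2 := by
  have h1 : ∀ z : ℝ, |phiH z| ≤ 1 := by
    intro z
    rw [phiH_def]
    split_ifs <;> norm_num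
  cases b
  · simpa using (h1 y).trans (by norm_num)
  · simp only [if_pos rfl]
    show |phiH (2 * y) - phiH (2 * y - 1)| ≤ 2
    calc |phiH (2 * y) - phiH (2 * y - 1)| ≤ |phiH (2 * y)| + |phiH (2 * y - 1)| := abs_sub _ _
      _ ≤ 2 := by linarith [h1 (2 * y), h1 (2 * y - 1)]

lemma integrable_phiH_affine (a c : ℝ) (ha : 0 < a) :
    Integrable (fun y : ℝ => phiH (a * y - c)) := by
  have h : (fun y : ℝ => phiH (a * y - c)) =
      (Set.Ico (c / a) ((c + 1) / a)).indicator (fun _ => (1 : ℝ)) := by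
    funext y
    rw [phiH_def, Set.indicator]
    by_cases hy : y ∈ Set.Ico (c / a) ((c + 1) / a)
    · rw [if_pos hy, if_pos]
      obtain ⟨hy1, hy2⟩ := hy
      rw [div_le_iff₀ ha] at hy1
      rw [lt_div_iff₀ ha] at hy2
      constructor <;> nlinarith
    · rw [if_neg hy, if_neg]
      intro ⟨h1, h2⟩
      apply hy
      constructor
      · rw [div_le_iff₀ ha]; nlinarith
      · rw [lt_div_iff₀ ha]; nlinarith
  rw [h]
  rw [integrable_indicator_iff measurableSet_Ico]
  exact integrableOn_const measure_Ico_lt_top.ne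

lemma integral_phiH_affine (a c : ℝ) (ha : 0 < a) :
    ∫ y : ℝ, phiH (a * y - c) = 1 / a := by
  have h : (fun y : ℝ => phiH (a * y - c)) =
      (Set.Ico (c / a) ((c + 1) / a)).indicator (fun _ => (1 : ℝ)) := by
    funext y
    rw [phiH_def, Set.indicator]
    by_cases hy : y ∈ Set.Ico (c / a) ((c + 1) / a)
    · rw [if_pos hy, if_pos]
      obtain ⟨hy1, hy2⟩ := hy
      rw [div_le_iff₀ ha] at hy1
      rw [lt_div_iff₀ ha] at hy2
      constructor <;> nlinarith
    · rw [if_neg hy, if_neg]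
      intro ⟨h1, h2⟩
      apply hy
      constructor
      · rw [div_le_iff₀ ha]; nlinarith
      · rw [lt_div_iff₀ ha]; nlinarith
  rw [h, MeasureTheory.integral_indicator_const _ measurableSet_Ico]
  have hd : (c + 1) / a - c / a = 1 / a := by field_simp; ring
  rw [Real.volume_real_Ico, smul_eq_mul, mul_one, hd,
    max_eq_left (by positivity)]

end MHAux3

namespace MHAux4

open MHAux MHAux2 MHAux3 MeasureTheory

lemma integral_psiH_affine (a c : ℝ) (ha : 0 < a) : ∫ y : ℝ, psiH (a * y - c) = 0 := by
  have h : (fun y : ℝ => psiH (a * y - c)) =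
      fun y => phiH ((2 * a) * y - 2 * c) - phiH ((2 * a) * y - (2 * c + 1)) := by
    funext y
    show phiH (2 * (a * y - c)) - phiH (2 * (a * y - c) - 1) = _
    rw [show 2 * (a * y - c) = (2 * a) * y - 2 * c from by ring,
      show (2 * a) * y - 2 * c - 1 = (2 * a) * y - (2 * c + 1) from by ring]
  rw [h, integral_sub (integrable_phiH_affine (2 * a) (2 * c) (by linarith))
      (integrable_phiH_affine (2 * a) (2 * c + 1) (by linarith)),
    integral_phiH_affine (2 * a) (2 * c) (by linarith),
    integral_phiH_affine (2 * a) (2 * c + 1) (by linarith), sub_self]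

lemma integrable_factor_affine (b : Bool) (a c : ℝ) (ha : 0 < a) :
    Integrable (fun y : ℝ => (if b then psiH else phiH) (a * y - c)) := by
  cases b
  · simpa using integrable_phiH_affine a c ha
  · simp only [if_true]
    have h : (fun y : ℝ => psiH (a * y - c)) =
        fun y => phiH ((2 * a) * y - 2 * c) - phiH ((2 * a) * y - (2 * c + 1)) := by
      funext y
      show phiH (2 * (a * y - c)) - phiH (2 * (a * y - c) - 1) = _
      rw [show 2 * (a * y - c) = (2 * a) * y - 2 * c from by ring,
        show (2 * a) * y - 2 * c - 1 = (2 * a) * y - (2 * c + 1) from by ring]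
    rw [h]
    exact (integrable_phiH_affine (2 * a) (2 * c) (by linarith)).sub
      (integrable_phiH_affine (2 * a) (2 * c + 1) (by linarith))

lemma integral_mhaarFun_total {d k : ℕ} (e : MVertex d) (j : Fin d → Fin (2 ^ k)) :
    ∫ x : Fin d → ℝ, mhaarFun (some (e, ⟨k, j⟩)) x = 0 := by
  simp only [mhaarFun_apply]
  rw [MeasureTheory.integral_const_mul]
  rw [MeasureTheory.integral_fintype_prod_volume_eq_prod (ι := Fin d)
    (f := fun i y => (if e.1 i then psiH else phiH) ((2 : ℝ) ^ k * y - (j i : ℝ)))]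
  obtain ⟨i, hi⟩ := Function.ne_iff.mp e.2
  rw [Finset.prod_eq_zero (Finset.mem_univ i), mul_zero]
  have hb : e.1 i = true := by
    cases h : e.1 i
    · exact absurd h hi
    · rfl
  simp only [hb, if_pos rfl]
  exact integral_psiH_affine ((2 : ℝ) ^ k) (j i : ℝ) (by positivity)

end MHAux4

open MHAux MHAux2 MHAux3 MHAux4 MeasureTheory in
/-- For `d ≥ 2`, `1 < p < ∞`, a fixed nonzero vertex `e` of `[0,1]^d` and
`f ∈ L^p([0,1]^d)`, the partial sums of `∑_k ∑_j (f, Ψ^e_{j,k}) Ψ^e_{j,k}`, along any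
enumeration `idx` of the indices ordered by generation `k` (and in a fixed order within each
generation), form a martingale on `([0,1]^d, B([0,1]^d), Leb)` with respect to the filtration
`F_n` generated by the first `n + 1` of these functions: the `n`-th partial sum is
`F_n`-measurable and `E(d_{n+1} | F_n) = 0` a.e., where `d_i = (f, Ψ^e_{idx i}) Ψ^e_{idx i}`. -/
theorem mhaar_series_martingale (d : ℕ) (hd : 2 ≤ d) (p : ℝ) (hp : 1 < p) (e : MVertex d)
    (f : (Fin d → ℝ) → ℝ)
    (hf : MemLp f (ENNReal.ofReal p) (volume.restrict (unitCube d)))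
    (idx : ℕ ≃ ((k : ℕ) × (Fin d → Fin (2 ^ k))))
    (hidx : Monotone fun i => (idx i).1) (n : ℕ) :
    Measurable[mhaarFilt d e idx n]
        (fun x => ∑ i ∈ Finset.range (n + 1),
          mhaarCoef d f (some (e, idx i)) * mhaarFun (some (e, idx i)) x) ∧
      MeasureTheory.condExp (m₀ := MeasurableSpace.pi) (mhaarFilt d e idx n)
          (volume.restrict (unitCube d))
          (fun x => mhaarCoef d f (some (e, idx (n + 1))) * mhaarFun (some (e, idx (n + 1))) x)
        =ᵐ[volume.restrict (unitCube d)] 0 := by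
  classical
  constructor
  · refine Finset.measurable_sum _ fun i hi => ?_
    refine Measurable.const_mul ?_ _
    refine Measurable.of_comap_le ?_
    exact le_iSup₂ (f := fun i (_ : i ∈ Finset.range (n + 1)) =>
      MeasurableSpace.comap (mhaarFun (some (e, idx i))) inferInstance) i hi
  · set μ := volume.restrict (unitCube d) with hμ
    have hUc : MeasurableSet (unitCube d) :=
      MeasurableSet.univ_pi fun _ => measurableSet_Ico
    have hμfin : IsFiniteMeasure μ := by
      constructor
      rw [hμ, Measure.restrict_apply_univ]
      have hv : volume (unitCube d) = 1 := by
        rw [unitCube, MeasureTheory.volume_pi_pi]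
        simp [Real.volume_Ico]
      simp [hv]
    have hm : mhaarFilt d e idx n ≤ MeasurableSpace.pi := by
      refine iSup₂_le fun i _ => ?_
      exact (measurable_mhaarFun _).comap_le
    haveI : SigmaFinite (μ.trim hm) := by
      haveI := MeasureTheory.isFiniteMeasure_trim (μ := μ) hm
      infer_instance
    rcases hK : idx (n + 1) with ⟨k', j'⟩
    set Q : Set (Fin d → ℝ) := {x | MHAux2.inCube j' x} with hQdef
    have hQ_unit : Q ⊆ unitCube d := fun x hx => inCube_subset_unitCube j' hx
    have hconst : ∀ i ∈ Finset.range (n + 1), ∀ x ∈ Q, ∀ y ∈ Q,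
        mhaarFun (some (e, idx i)) x = mhaarFun (some (e, idx i)) y := by
      intro i hi x hx y hy
      have hilt : i < n + 1 := Finset.mem_range.mp hi
      have hk1 : (idx i).1 ≤ (idx (n + 1)).1 := hidx (by omega)
      have hne : idx i ≠ idx (n + 1) := fun h => by
        have : i = n + 1 := idx.injective h
        omega
      rw [hK] at hk1 hne
      rcases hI : idx i with ⟨k, j⟩
      rw [hI] at hk1 hne
      exact mhaarFun_const_on e j j' hne hk1 hx hy
    have hside : mhaarFilt d e idx n ≤ sideAlg Q :=
      iSup₂_le fun i hi => comap_le_sideAlg (hconst i hi)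
    set Ψ : (Fin d → ℝ) → ℝ := mhaarFun (some (e, ⟨k', j'⟩)) with hΨ
    have hΨzero : ∀ x, x ∉ Q → Ψ x = 0 := fun x hx => mhaarFun_eq_zero e j' hx
    have hΨtotal : ∫ x : Fin d → ℝ, Ψ x = 0 := integral_mhaarFun_total e j'
    have hΨint : Integrable Ψ μ := by
      refine Integrable.mono'
        (integrable_const ((2 : ℝ) ^ (((k' * d : ℕ) : ℝ) / 2) * 2 ^ d))
        ((measurable_mhaarFun _).aestronglyMeasurable) (ae_of_all _ fun x => ?_)
      rw [hΨ, mhaarFun_apply, Real.norm_eq_abs, abs_mul,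
        abs_of_pos (show (0:ℝ) < (2 : ℝ) ^ (((k' * d : ℕ) : ℝ) / 2) by positivity)]
      refine mul_le_mul_of_nonneg_left ?_ (by positivity)
      calc |∏ i, (if e.1 i then psiH else phiH) ((2 : ℝ) ^ k' * x i - (j' i : ℝ))|
          = ∏ i, |(if e.1 i then psiH else phiH) ((2 : ℝ) ^ k' * x i - (j' i : ℝ))| :=
            Finset.abs_prod _ _
        _ ≤ ∏ _i : Fin d, (2 : ℝ) :=
            Finset.prod_le_prod (fun i _ => abs_nonneg _) (fun i _ => abs_factor_le _ _)
        _ = 2 ^ d := by simp [Finset.prod_const]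
    refine (MeasureTheory.ae_eq_condExp_of_forall_setIntegral_eq hm (hΨint.const_mul _)
      (fun s _ _ => (integrable_zero _ _ _).integrableOn)
      (fun s hs _ => ?_) ?_).symm
    · have hsb : MeasurableSet s := hm s hs
      have hΨs : ∫ x in s, Ψ x ∂μ = 0 := by
        rcases hside s hs with hQs | hdis
        · rw [hμ, Measure.restrict_restrict hsb,
            setIntegral_eq_integral_of_forall_compl_eq_zero]
          · exact hΨtotal
          · intro x hx
            refine hΨzero x fun hxQ => hx ⟨hQs hxQ, hQ_unit hxQ⟩
        · exact setIntegral_eq_zero_of_forall_eq_zero fun x hx =>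
            hΨzero x (Set.disjoint_right.mp hdis hx)
      simp only [Pi.zero_apply, integral_zero]
      rw [MeasureTheory.integral_const_mul, hΨs, mul_zero]
    · exact StronglyMeasurable.aestronglyMeasurable stronglyMeasurable_zero
end
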